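/- Let L be a frame, P a sub-pcd-lattice of L that is a basis of L, and ⊲ a strong inclusion on P compatible with L. Then there exist a compact regular frame M and a dense surjective frame homomorphism μ : M → L such that for every compact regular frame L' and every frame homomorphism f : L' → L with ⊲ finer than f (i.e. for all x, y ∈ L' with y ≺ x there exist p, p' ∈ P with f y ≤ p, p ⊲ p' and p' ≤ f x), there exists a unique frame homomorphism g : L' → M with f = μ ∘ g. -/

import Mathlib

/-- The well-inside relation of a frame: `b` is well inside `a` iff `bᶜ ⊔ a = ⊤`. -/
def WellInside {L : Type*} [Order.Frame L] (b a : L) : Prop := bᶜ ⊔ a = ⊤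

/-- A frame is regular if every element is the join of the elements well inside it. -/
def IsRegularFrame (L : Type*) [Order.Frame L] : Prop :=
  ∀ a : L, a = sSup {b | WellInside b a}

/-- A frame is compact if `⊤` is a compact element. -/
def IsCompactFrame (L : Type*) [Order.Frame L] : Prop :=
  ∀ S : Set L, ⊤ ≤ sSup S → ∃ T : Set L, T ⊆ S ∧ T.Finite ∧ ⊤ ≤ sSup T

/-- A subset `P` of a frame `L` is a basis if every element of `L` is the join
of the elements of `P` below it. -/
def IsBasis {L : Type*} [Order.Frame L] (P : Set L) : Prop :=
  ∀ a : L, a = sSup {p | p ∈ P ∧ p ≤ a}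

/-- A sub-pcd-lattice of a frame `L`: a subset containing `⊥` and `⊤`, closed
under binary meets, binary joins and pseudocomplements (computed in `L`). -/
def IsSubPcdLattice {L : Type*} [Order.Frame L] (P : Set L) : Prop :=
  ⊥ ∈ P ∧ ⊤ ∈ P ∧ (∀ x ∈ P, ∀ y ∈ P, x ⊓ y ∈ P) ∧
    (∀ x ∈ P, ∀ y ∈ P, x ⊔ y ∈ P) ∧ (∀ x ∈ P, xᶜ ∈ P)

/-- A strong inclusion on a sub-pcd-lattice `P` of a frame `L`:
conditions (1)–(7) of Banaschewski. -/
def IsStrongInclusion {L : Type*} [Order.Frame L] (P : Set L) (r : L → L → Prop) : Prop :=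
  (r ⊥ ⊥ ∧ r ⊤ ⊤) ∧
  (∀ x a b y, x ∈ P → y ∈ P → x ≤ a → r a b → b ≤ y → r x y) ∧
  (∀ x a b, r x a → r x b → r x (a ⊓ b)) ∧
  (∀ x y a, r x a → r y a → r (x ⊔ y) a) ∧
  (∀ a b, r a b → r bᶜ aᶜ) ∧
  (∀ a b, r a b → WellInside a b) ∧
  (∀ a b, r a b → ∃ z ∈ P, r a z ∧ r z b)

/-!
The compactification is the frame of round ideals of `(P, ⊲)`: ideals `J` of `P` in which every
element is `⊲`-below another element of `J`. Interpolation for `⊲` and condition (5) show that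
the round ideal `{x | x ⊲ y ≤ z}` is well inside `J` whenever `z ⊲ b ∈ J`, so this frame is
regular; it is compact because `⊤ ∈ ⋁ S` is witnessed by finitely many members of `S`. The map
`J ↦ ⋁ J` is dense, and onto because basis and compatibility give `a = ⋁ {x | x ⊲ y ≤ a}`.
A map `f : L' → L` for which `⊲` is finer lifts to `x ↦ {q | q ⊲ p ≤ f y for some y ≺ x}`; this
preserves joins because `y ≺ ⋁ S` in a compact regular frame splits into finitely many pieces
well inside members of `S`. Through a dense map two lifts must agree on all `y ≺ x`, which
determines them on a regular frame.
-/

universe u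

namespace WellInside

variable {α : Type*} [Order.Frame α] {a a' a₁ a₂ b b' b₁ b₂ : α}

theorem le (h : WellInside b a) : b ≤ a :=
  himp_eq_top_iff.1 (top_unique (h.ge.trans compl_sup_le_himp))

theorem bot_left (a : α) : WellInside ⊥ a := by simp [WellInside]

theorem top_right (b : α) : WellInside b ⊤ := by simp [WellInside]

theorem mono (hb : b' ≤ b) (h : WellInside b a) (ha : a ≤ a') : WellInside b' a' :=
  top_unique (h.ge.trans (sup_le_sup (compl_anti hb) ha))

theorem sup_left (h₁ : WellInside b₁ a) (h₂ : WellInside b₂ a) : WellInside (b₁ ⊔ b₂) a := by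
  rw [WellInside, compl_sup, sup_inf_right, h₁, h₂, inf_top_eq]

theorem inf (h₁ : WellInside b₁ a₁) (h₂ : WellInside b₂ a₂) :
    WellInside (b₁ ⊓ b₂) (a₁ ⊓ a₂) := by
  rw [WellInside, sup_inf_left, (mono inf_le_left h₁ le_rfl : _ = ⊤),
    (mono inf_le_right h₂ le_rfl : _ = ⊤), inf_top_eq]

theorem supClosed_left (a : α) : SupClosed {b | WellInside b a} :=
  fun _ h₁ _ h₂ => sup_left h₁ h₂

end WellInside

section CompactRegular

variable {α : Type*} [Order.Frame α]

theorem isCompactFrame_iff_isCompactElement_top :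
    IsCompactFrame α ↔ IsCompactElement (⊤ : α) := by
  rw [CompleteLattice.isCompactElement_iff_exists_le_sSup_of_le_sSup]
  refine forall₂_congr fun S _ => ⟨fun ⟨T, hTS, hT, htop⟩ => ?_, fun ⟨t, htS, htop⟩ => ?_⟩
  · exact ⟨hT.toFinset, by simpa using hTS, by simpa [Finset.sup_id_eq_sSup] using htop⟩
  · exact ⟨t, htS, t.finite_toSet, by rwa [← Finset.sup_id_eq_sSup]⟩

theorem IsCompactFrame.exists_top_le_of_directedOn (hc : IsCompactFrame α) {S : Set α}
    (hne : S.Nonempty) (hd : DirectedOn (· ≤ ·) S) (h : ⊤ ≤ sSup S) : ∃ s ∈ S, ⊤ ≤ s :=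
  (CompleteLattice.isCompactElement_iff_le_of_directed_sSup_le α ⊤).1
    (isCompactFrame_iff_isCompactElement_top.1 hc) S hne hd h

theorem IsCompactFrame.exists_wellInside_of_directedOn (hc : IsCompactFrame α) {W : Set α}
    {y : α} (hne : W.Nonempty) (hd : DirectedOn (· ≤ ·) W) (h : WellInside y (sSup W)) :
    ∃ w ∈ W, WellInside y w := by
  obtain ⟨w₀, hw₀⟩ := hne
  have htop : ⊤ ≤ sSup ((yᶜ ⊔ ·) '' W) := by
    refine h.ge.trans (sup_le ?_ (sSup_le fun w hw => ?_))
    · exact le_sup_left.trans (le_sSup (Set.mem_image_of_mem _ hw₀))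
    · exact le_sup_right.trans (le_sSup (Set.mem_image_of_mem _ hw))
  obtain ⟨_, ⟨w, hw, rfl⟩, hw_top⟩ := hc.exists_top_le_of_directedOn
    ⟨_, Set.mem_image_of_mem _ hw₀⟩ (hd.mono_comp fun _ _ h => sup_le_sup_left h yᶜ) htop
  exact ⟨w, hw, top_unique hw_top⟩

theorem IsCompactFrame.exists_wellInside_between (hc : IsCompactFrame α)
    (hreg : IsRegularFrame α) {x y : α} (h : WellInside y x) :
    ∃ z, WellInside y z ∧ WellInside z x := by
  rw [hreg x] at h
  obtain ⟨z, hzx, hyz⟩ := hc.exists_wellInside_of_directedOn ⟨⊥, WellInside.bot_left x⟩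
    (WellInside.supClosed_left x).directedOn h
  exact ⟨z, hyz, hzx⟩

theorem IsCompactFrame.exists_finset_wellInside_of_wellInside_sSup (hc : IsCompactFrame α)
    (hreg : IsRegularFrame α) {S : Set α} {y : α} (h : WellInside y (sSup S)) :
    ∃ F : Finset α, ↑F ⊆ {u | ∃ x ∈ S, WellInside u x} ∧ WellInside y (F.sup id) := by
  classical
  set U := {u | ∃ x ∈ S, WellInside u x}
  have hSU : sSup S ≤ sSup U := sSup_le fun x hx =>
    (hreg x).trans_le (sSup_le fun u hu => le_sSup ⟨x, hx, hu⟩)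
  have htop : ⊤ ≤ sSup (insert yᶜ U) := by
    rw [sSup_insert]
    exact h.ge.trans (sup_le_sup_left hSU _)
  obtain ⟨t, htU, ht_top⟩ :=
    (CompleteLattice.isCompactElement_iff_exists_le_sSup_of_le_sSup α ⊤).1
      (isCompactFrame_iff_isCompactElement_top.1 hc) _ htop
  refine ⟨t.erase yᶜ, fun u hu => ?_, top_unique (ht_top.trans (Finset.sup_le fun u hu => ?_))⟩
  · obtain ⟨hne, hut⟩ := Finset.mem_erase.1 hu
    exact (Set.mem_insert_iff.1 (htU hut)).resolve_left hne
  · by_cases hu' : u = yᶜ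
    · exact hu' ▸ le_sup_left
    · exact le_sup_of_le_right (Finset.le_sup (f := id) (Finset.mem_erase.2 ⟨hu', hu⟩))

end CompactRegular

theorem Finset.exists_sup_le_sup_id {ι β : Type*} [SemilatticeSup β] [OrderBot β]
    (F : Finset ι) {g : ι → β} {A : Set β} (h : ∀ i ∈ F, ∃ p ∈ A, g i ≤ p) :
    ∃ G : Finset β, ↑G ⊆ A ∧ F.sup g ≤ G.sup id := by
  classical
  choose! c hcA hc using h
  refine ⟨F.image c, fun p hp => ?_, Finset.sup_le fun i hi => ?_⟩
  · obtain ⟨i, hi, rfl⟩ := Finset.mem_image.1 hp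
    exact hcA i hi
  · exact (hc i hi).trans (Finset.le_sup (f := id) (Finset.mem_image_of_mem c hi))

section StrongInclusion

variable {L : Type*} [Order.Frame L] {P : Set L} {r : L → L → Prop}

namespace IsSubPcdLattice

theorem bot_mem (hP : IsSubPcdLattice P) : ⊥ ∈ P := hP.1

theorem top_mem (hP : IsSubPcdLattice P) : ⊤ ∈ P := hP.2.1

theorem inf_mem (hP : IsSubPcdLattice P) {x y : L} (hx : x ∈ P) (hy : y ∈ P) : x ⊓ y ∈ P :=
  hP.2.2.1 x hx y hy

theorem sup_mem (hP : IsSubPcdLattice P) {x y : L} (hx : x ∈ P) (hy : y ∈ P) : x ⊔ y ∈ P :=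
  hP.2.2.2.1 x hx y hy

theorem compl_mem (hP : IsSubPcdLattice P) {x : L} (hx : x ∈ P) : xᶜ ∈ P := hP.2.2.2.2 x hx

theorem finset_sup_mem (hP : IsSubPcdLattice P) {F : Finset L} (hF : ↑F ⊆ P) : F.sup id ∈ P :=
  Finset.sup_induction hP.bot_mem (fun _ h₁ _ h₂ => hP.sup_mem h₁ h₂) hF

end IsSubPcdLattice

namespace IsStrongInclusion

theorem bot_bot (hr : IsStrongInclusion P r) : r ⊥ ⊥ := hr.1.1

theorem top_top (hr : IsStrongInclusion P r) : r ⊤ ⊤ := hr.1.2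

theorem mono (hr : IsStrongInclusion P r) {x a b y : L} (hx : x ∈ P) (hy : y ∈ P)
    (hxa : x ≤ a) (hab : r a b) (hby : b ≤ y) : r x y :=
  hr.2.1 x a b y hx hy hxa hab hby

theorem inf_right (hr : IsStrongInclusion P r) {x a b : L} (ha : r x a) (hb : r x b) :
    r x (a ⊓ b) :=
  hr.2.2.1 x a b ha hb

theorem sup_left (hr : IsStrongInclusion P r) {x y a : L} (hx : r x a) (hy : r y a) :
    r (x ⊔ y) a :=
  hr.2.2.2.1 x y a hx hy

theorem compl (hr : IsStrongInclusion P r) {a b : L} (h : r a b) : r bᶜ aᶜ := hr.2.2.2.2.1 a b h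

theorem wellInside (hr : IsStrongInclusion P r) {a b : L} (h : r a b) : WellInside a b :=
  hr.2.2.2.2.2.1 a b h

theorem le (hr : IsStrongInclusion P r) {a b : L} (h : r a b) : a ≤ b := (hr.wellInside h).le

theorem exists_between (hr : IsStrongInclusion P r) {a b : L} (h : r a b) :
    ∃ z ∈ P, r a z ∧ r z b :=
  hr.2.2.2.2.2.2 a b h

theorem finset_sup_left (hr : IsStrongInclusion P r) (hP : IsSubPcdLattice P) {F : Finset L}
    {b : L} (hb : b ∈ P) (h : ∀ a ∈ F, r a b) : r (F.sup id) b :=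
  Finset.sup_induction (p := (r · b)) (hr.mono hP.bot_mem hb le_rfl hr.bot_bot bot_le)
    (fun _ h₁ _ h₂ => hr.sup_left h₁ h₂) h

theorem exists_finset_sup_rel (hr : IsStrongInclusion P r) (hP : IsSubPcdLattice P) {A : Set L}
    (hAP : A ⊆ P) (hA : ∀ a ∈ A, ∃ b ∈ A, r a b) {F : Finset L} (hF : ↑F ⊆ A) :
    ∃ G : Finset L, ↑G ⊆ A ∧ r (F.sup id) (G.sup id) := by
  classical
  choose! c hcA hc using fun a ha => hA a (hF ha)
  have hGA : ↑(F.image c) ⊆ A := by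
    rw [Finset.coe_image]
    exact Set.image_subset_iff.2 fun a ha => hcA a ha
  have hGP := hP.finset_sup_mem (hGA.trans hAP)
  refine ⟨F.image c, hGA, hr.finset_sup_left hP hGP fun a ha => ?_⟩
  exact hr.mono (hAP (hF ha)) hGP le_rfl (hc a ha)
    (Finset.le_sup (f := id) (Finset.mem_image_of_mem c ha))

end IsStrongInclusion

end StrongInclusion

/-- The ideals of `P` that are round for `r`; Banaschewski's strongly regular ideals. -/
structure RoundIdeal {L : Type*} [Order.Frame L] (P : Set L) (r : L → L → Prop) where
  carrier : Set L
  subset : carrier ⊆ P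
  bot_mem : ⊥ ∈ carrier
  mem_of_le : ∀ ⦃x y⦄, x ∈ P → y ∈ carrier → x ≤ y → x ∈ carrier
  sup_mem : ∀ ⦃x y⦄, x ∈ carrier → y ∈ carrier → x ⊔ y ∈ carrier
  exists_rel : ∀ ⦃x⦄, x ∈ carrier → ∃ y ∈ carrier, r x y

namespace RoundIdeal

variable {L : Type*} [Order.Frame L] {P : Set L} {r : L → L → Prop}

instance : SetLike (RoundIdeal P r) L where
  coe := carrier
  coe_injective J K h := by cases J; cases K; congr

instance : PartialOrder (RoundIdeal P r) := .ofSetLike (RoundIdeal P r) L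

theorem finset_sup_mem (J : RoundIdeal P r) {F : Finset L} (hF : ↑F ⊆ (J : Set L)) :
    F.sup id ∈ J :=
  Finset.sup_induction J.bot_mem (fun _ h₁ _ h₂ => J.sup_mem h₁ h₂) hF

variable [hP : Fact (IsSubPcdLattice P)] [hr : Fact (IsStrongInclusion P r)]

instance : SupSet (RoundIdeal P r) where
  sSup S :=
    { carrier := {x | x ∈ P ∧ ∃ F : Finset L, ↑F ⊆ ⋃ J ∈ S, (J : Set L) ∧ x ≤ F.sup id}
      subset := fun _ hx => hx.1
      bot_mem := ⟨hP.out.bot_mem, ∅, by simp, le_rfl⟩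
      mem_of_le := fun _ _ hx ⟨_, F, hF, hy⟩ hxy => ⟨hx, F, hF, hxy.trans hy⟩
      sup_mem := by
        classical
        rintro x y ⟨hx, F₁, hF₁, hxF⟩ ⟨hy, F₂, hF₂, hyF⟩
        refine ⟨hP.out.sup_mem hx hy, F₁ ∪ F₂, by simpa using And.intro hF₁ hF₂, ?_⟩
        rw [Finset.sup_union]
        exact sup_le_sup hxF hyF
      exists_rel := by
        rintro x ⟨hx, F, hF, hxF⟩
        have hUP : ⋃ J ∈ S, (J : Set L) ⊆ P := Set.iUnion₂_subset fun J _ => J.subset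
        obtain ⟨G, hG, hFG⟩ := hr.out.exists_finset_sup_rel hP.out hUP (fun a ha => by
          obtain ⟨J, hJ, haJ⟩ := Set.mem_iUnion₂.1 ha
          obtain ⟨b, hbJ, hab⟩ := J.exists_rel haJ
          exact ⟨b, Set.mem_iUnion₂.2 ⟨J, hJ, hbJ⟩, hab⟩) hF
        have hGP := hP.out.finset_sup_mem (hG.trans hUP)
        exact ⟨G.sup id, ⟨hGP, G, hG, le_rfl⟩,
          hr.out.mono hx hGP hxF hFG le_rfl⟩ }

theorem mem_sSup {S : Set (RoundIdeal P r)} {x : L} :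
    x ∈ sSup S ↔ x ∈ P ∧ ∃ F : Finset L, ↑F ⊆ ⋃ J ∈ S, (J : Set L) ∧ x ≤ F.sup id :=
  Iff.rfl

instance : Min (RoundIdeal P r) where
  min J K :=
    { carrier := J ∩ K
      subset := fun _ hx => J.subset hx.1
      bot_mem := ⟨J.bot_mem, K.bot_mem⟩
      mem_of_le := fun _ _ hx hy hxy => ⟨J.mem_of_le hx hy.1 hxy, K.mem_of_le hx hy.2 hxy⟩
      sup_mem := fun _ _ hx hy => ⟨J.sup_mem hx.1 hy.1, K.sup_mem hx.2 hy.2⟩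
      exists_rel := by
        rintro x ⟨hxJ, hxK⟩
        obtain ⟨b, hbJ, hxb⟩ := J.exists_rel hxJ
        obtain ⟨c, hcK, hxc⟩ := K.exists_rel hxK
        have hbc := hP.out.inf_mem (J.subset hbJ) (K.subset hcK)
        exact ⟨b ⊓ c, ⟨J.mem_of_le hbc hbJ inf_le_left, K.mem_of_le hbc hcK inf_le_right⟩,
          hr.out.inf_right hxb hxc⟩ }

theorem isLUB_sSup (S : Set (RoundIdeal P r)) : IsLUB S (sSup S) := by
  refine ⟨fun J hJ x hx => ⟨J.subset hx, {x}, ?_, by simp⟩, fun K hK x ⟨hx, F, hF, hxF⟩ => ?_⟩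
  · rw [Finset.coe_singleton, Set.singleton_subset_iff]
    exact Set.mem_iUnion₂_of_mem hJ hx
  · refine K.mem_of_le hx (K.finset_sup_mem fun q hq => ?_) hxF
    obtain ⟨J, hJ, hqJ⟩ := Set.mem_iUnion₂.1 (hF hq)
    exact hK hJ hqJ

instance : CompleteLattice (RoundIdeal P r) where
  __ := completeLatticeOfSup (RoundIdeal P r) isLUB_sSup
  inf := (· ⊓ ·)
  inf_le_left _ _ _ hx := hx.1
  inf_le_right _ _ _ hx := hx.2
  le_inf _ _ _ hJ hK _ hx := ⟨hJ hx, hK hx⟩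

instance : Order.Frame (RoundIdeal P r) :=
  .ofMinimalAxioms
  { inf_sSup_le_iSup_inf := by
      classical
      intro J S
      rw [← sSup_image]
      rintro x ⟨hxJ, hx, F, hF, hxF⟩
      refine ⟨hx, F.image (x ⊓ ·), fun y hy => ?_, ?_⟩
      · obtain ⟨q, hq, rfl⟩ := Finset.mem_image.1 hy
        obtain ⟨K, hK, hqK⟩ := Set.mem_iUnion₂.1 (hF hq)
        have hxq := hP.out.inf_mem hx (K.subset hqK)
        exact Set.mem_iUnion₂.2 ⟨J ⊓ K, Set.mem_image_of_mem _ hK,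
          J.mem_of_le hxq hxJ inf_le_left, K.mem_of_le hxq hqK inf_le_right⟩
      · rw [Finset.sup_image]
        exact (le_inf le_rfl hxF).trans (Finset.sup_inf_distrib_left F id x).le }

theorem eq_top_of_top_mem {J : RoundIdeal P r} (h : ⊤ ∈ J) : J = ⊤ :=
  top_unique fun _ hx => J.mem_of_le ((⊤ : RoundIdeal P r).subset hx) h le_top

theorem eq_bot_of_forall_eq_bot {J : RoundIdeal P r} (h : ∀ x ∈ J, x = ⊥) : J = ⊥ :=
  le_bot_iff.1 fun x hx => h x hx ▸ (⊥ : RoundIdeal P r).bot_mem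

theorem sup_mem_sup {J K : RoundIdeal P r} {x y : L} (hx : x ∈ J) (hy : y ∈ K) :
    x ⊔ y ∈ J ⊔ K :=
  (J ⊔ K).sup_mem ((le_sup_left : J ≤ J ⊔ K) hx) ((le_sup_right : K ≤ J ⊔ K) hy)

def below (D : Set L) (hne : D.Nonempty) (hD : DirectedOn (· ≤ ·) D) : RoundIdeal P r where
  carrier := {x | x ∈ P ∧ ∃ y ∈ P, r x y ∧ ∃ d ∈ D, y ≤ d}
  subset _ hx := hx.1
  bot_mem := ⟨hP.out.bot_mem, ⊥, hP.out.bot_mem, hr.out.bot_bot, hne.some, hne.some_mem, bot_le⟩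
  mem_of_le _ _ hx := fun ⟨_, y, hy, hxy, d, hd, hyd⟩ hle =>
    ⟨hx, y, hy, hr.out.mono hx hy hle hxy le_rfl, d, hd, hyd⟩
  sup_mem := by
    rintro x₁ x₂ ⟨hx₁, y₁, hy₁, hxy₁, d₁, hd₁, hyd₁⟩ ⟨hx₂, y₂, hy₂, hxy₂, d₂, hd₂, hyd₂⟩
    obtain ⟨d, hd, hd₁d, hd₂d⟩ := hD d₁ hd₁ d₂ hd₂
    have hy := hP.out.sup_mem hy₁ hy₂
    exact ⟨hP.out.sup_mem hx₁ hx₂, y₁ ⊔ y₂, hy,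
      hr.out.sup_left (hr.out.mono hx₁ hy le_rfl hxy₁ le_sup_left)
        (hr.out.mono hx₂ hy le_rfl hxy₂ le_sup_right),
      d, hd, sup_le (hyd₁.trans hd₁d) (hyd₂.trans hd₂d)⟩
  exists_rel := by
    rintro x ⟨hx, y, hy, hxy, d, hd, hyd⟩
    obtain ⟨z, hz, hxz, hzy⟩ := hr.out.exists_between hxy
    exact ⟨z, ⟨hz, y, hy, hzy, d, hd, hyd⟩, hxz⟩

section Below

variable {D D' : Set L} {hne : D.Nonempty} {hD : DirectedOn (· ≤ ·) D} {hne' : D'.Nonempty}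
  {hD' : DirectedOn (· ≤ ·) D'} {x : L}

theorem mem_below :
    x ∈ (below D hne hD : RoundIdeal P r) ↔ x ∈ P ∧ ∃ y ∈ P, r x y ∧ ∃ d ∈ D, y ≤ d :=
  Iff.rfl

theorem below_mono (h : D ⊆ D') :
    (below D hne hD : RoundIdeal P r) ≤ below D' hne' hD' :=
  fun _ ⟨hx, y, hy, hxy, d, hd, hyd⟩ => ⟨hx, y, hy, hxy, d, h hd, hyd⟩

end Below

def principal (a : L) : RoundIdeal P r :=
  below {a} (Set.singleton_nonempty a) (directedOn_singleton a)

theorem mem_principal {a x : L} :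
    x ∈ (principal a : RoundIdeal P r) ↔ x ∈ P ∧ ∃ y ∈ P, r x y ∧ y ≤ a := by
  simp only [principal, mem_below, Set.mem_singleton_iff, exists_eq_left]

theorem le_of_mem_principal {a x : L} (hx : x ∈ (principal a : RoundIdeal P r)) : x ≤ a :=
  have ⟨_, _, _, hxy, hya⟩ := mem_principal.1 hx
  (hr.out.le hxy).trans hya

theorem top_mem : ⊤ ∈ (⊤ : RoundIdeal P r) :=
  (le_top : (principal ⊤ : RoundIdeal P r) ≤ ⊤) (mem_principal.2
    ⟨hP.out.top_mem, ⊤, hP.out.top_mem, hr.out.top_top, le_rfl⟩)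

theorem isCompactFrame : IsCompactFrame (RoundIdeal P r) := by
  refine isCompactFrame_iff_isCompactElement_top.2
    ((CompleteLattice.isCompactElement_iff_le_of_directed_sSup_le _ _).2 fun S hne hd htop => ?_)
  obtain ⟨-, F, hF, hF_top⟩ := mem_sSup.1 (htop top_mem)
  obtain ⟨J, hJ, hFJ⟩ :=
    DirectedOn.exists_mem_subset_of_finset_subset_biUnion (f := SetLike.coe) hne hd hF
  exact ⟨J, hJ, (eq_top_of_top_mem (J.mem_of_le hP.out.top_mem (J.finset_sup_mem hFJ) hF_top)).ge⟩

theorem principal_wellInside {J : RoundIdeal P r} {z b : L} (hz : z ∈ P) (hb : b ∈ J)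
    (hzb : r z b) : WellInside (principal z) J := by
  -- `z ⊲ c ⊲ b`: then `cᶜ` lies in `principal zᶜ`, which is disjoint from `principal z`,
  -- and `cᶜ ⊔ b = ⊤`
  obtain ⟨c, hc, hzc, hcb⟩ := hr.out.exists_between hzb
  have hdisj : principal zᶜ ≤ (principal z : RoundIdeal P r)ᶜ := by
    refine le_compl_iff_disjoint_right.2 (disjoint_iff.2 (eq_bot_of_forall_eq_bot fun x hx => ?_))
    exact le_bot_iff.1 ((le_inf (le_of_mem_principal hx.2) (le_of_mem_principal hx.1)).trans
      (inf_compl_self z).le)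
  have hc_compl : cᶜ ∈ (principal zᶜ : RoundIdeal P r) := mem_principal.2
    ⟨hP.out.compl_mem hc, zᶜ, hP.out.compl_mem hz, hr.out.compl hzc, le_rfl⟩
  have htop : principal zᶜ ⊔ J = ⊤ := by
    refine eq_top_of_top_mem ?_
    rw [← (hr.out.wellInside hcb : cᶜ ⊔ b = ⊤)]
    exact sup_mem_sup hc_compl hb
  exact top_unique (htop.ge.trans (sup_le_sup_right hdisj J))

theorem isRegularFrame : IsRegularFrame (RoundIdeal P r) := by
  refine fun J => le_antisymm (fun x hx => ?_) (sSup_le fun K hK => hK.le)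
  obtain ⟨b, hb, hxb⟩ := J.exists_rel hx
  obtain ⟨z, hz, hxz, hzb⟩ := hr.out.exists_between hxb
  exact (le_sSup (s := {K | WellInside K J}) (principal_wellInside hz hb hzb))
    (mem_principal.2 ⟨J.subset hx, z, hz, hxz, le_rfl⟩)

def joinHom : FrameHom (RoundIdeal P r) L where
  toFun J := sSup (J : Set L)
  map_inf' J K := by
    refine le_antisymm (le_inf (sSup_le_sSup inf_le_left) (sSup_le_sSup inf_le_right)) ?_
    rw [sSup_inf_sSup]
    refine iSup₂_le fun p hp => le_sSup ?_
    have hpP := hP.out.inf_mem (J.subset hp.1) (K.subset hp.2)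
    exact ⟨J.mem_of_le hpP hp.1 inf_le_left, K.mem_of_le hpP hp.2 inf_le_right⟩
  map_top' := top_unique (le_sSup top_mem)
  map_sSup' S := by
    refine le_antisymm (sSup_le fun x hx => ?_) (sSup_le ?_)
    · obtain ⟨-, F, hF, hxF⟩ := mem_sSup.1 hx
      refine hxF.trans (Finset.sup_le fun q hq => ?_)
      obtain ⟨J, hJ, hqJ⟩ := Set.mem_iUnion₂.1 (hF hq)
      exact (le_sSup hqJ).trans (le_sSup (Set.mem_image_of_mem _ hJ))
    · rintro _ ⟨J, hJ, rfl⟩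
      exact sSup_le_sSup (le_sSup hJ : J ≤ sSup S)

theorem eq_bot_of_joinHom_eq_bot {J : RoundIdeal P r} (h : joinHom J = ⊥) : J = ⊥ :=
  eq_bot_of_forall_eq_bot fun _ hx => le_bot_iff.1 (h ▸ le_sSup hx)

theorem joinHom_below (hPb : IsBasis P) (hcompat : ∀ a ∈ P, a = sSup {x | x ∈ P ∧ r x a})
    {D : Set L} (hne : D.Nonempty) (hD : DirectedOn (· ≤ ·) D) :
    joinHom (below D hne hD : RoundIdeal P r) = sSup D := by
  refine le_antisymm (sSup_le fun x ⟨_, y, _, hxy, d, hd, hyd⟩ => ?_) (sSup_le fun d hd => ?_)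
  · exact (hr.out.le hxy).trans (hyd.trans (le_sSup hd))
  · rw [hPb d]
    refine sSup_le fun p ⟨hp, hpd⟩ => ?_
    rw [hcompat p hp]
    exact sSup_le fun x ⟨hx, hxp⟩ => le_sSup ⟨hx, p, hp, hxp, d, hd, hpd⟩

end RoundIdeal

def IsFinerThan {L L' : Type*} [Order.Frame L] [Order.Frame L'] (P : Set L)
    (r : L → L → Prop) (f : FrameHom L' L) : Prop :=
  ∀ x y : L', WellInside y x → ∃ p ∈ P, ∃ p' ∈ P, f y ≤ p ∧ r p p' ∧ p' ≤ f x

theorem FrameHom.le_of_comp_eq_of_dense {L M L' : Type*} [Order.Frame L] [Order.Frame M]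
    [Order.Frame L'] {μ : FrameHom M L} (hμ : ∀ a, μ a = ⊥ → a = ⊥) (hreg : IsRegularFrame L')
    {g₁ g₂ : FrameHom L' M} (h : μ.comp g₁ = μ.comp g₂) (x : L') : g₁ x ≤ g₂ x := by
  rw [congrArg g₁ (hreg x), map_sSup]
  refine sSup_le (Set.forall_mem_image.2 fun y (hyx : WellInside y x) => ?_)
  have hdisj : g₁ y ⊓ g₂ yᶜ = ⊥ := hμ _ <| by
    rw [map_inf, ← comp_apply, h, comp_apply, ← map_inf, ← map_inf, inf_compl_self, map_bot,
      map_bot]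
  have hcodisj : g₂ yᶜ ⊔ g₂ x = ⊤ := by rw [← map_sup, hyx, map_top]
  exact (disjoint_iff.2 hdisj).le_of_codisjoint (codisjoint_iff.2 hcodisj)

theorem FrameHom.eq_of_comp_eq_of_dense {L M L' : Type*} [Order.Frame L] [Order.Frame M]
    [Order.Frame L'] {μ : FrameHom M L} (hμ : ∀ a, μ a = ⊥ → a = ⊥) (hreg : IsRegularFrame L')
    {g₁ g₂ : FrameHom L' M} (h : μ.comp g₁ = μ.comp g₂) : g₁ = g₂ :=
  FrameHom.ext fun x =>
    (le_of_comp_eq_of_dense hμ hreg h x).antisymm (le_of_comp_eq_of_dense hμ hreg h.symm x)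

namespace RoundIdeal

variable {L L' : Type*} [Order.Frame L] [Order.Frame L'] {P : Set L} {r : L → L → Prop}
  [hP : Fact (IsSubPcdLattice P)] [hr : Fact (IsStrongInclusion P r)]

def lift (f : FrameHom L' L) (x : L') : RoundIdeal P r :=
  below (f '' {y | WellInside y x}) (Set.Nonempty.image f ⟨⊥, WellInside.bot_left x⟩)
    ((WellInside.supClosed_left x).directedOn.mono_comp fun _ _ h => OrderHomClass.mono f h)

theorem mem_lift {f : FrameHom L' L} {x : L'} {q : L} :
    q ∈ (lift f x : RoundIdeal P r) ↔ q ∈ P ∧ ∃ p ∈ P, r q p ∧ ∃ y, WellInside y x ∧ p ≤ f y := by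
  simp only [lift, mem_below, Set.exists_mem_image]
  rfl

theorem lift_mono (f : FrameHom L' L) {x₁ x₂ : L'} (h : x₁ ≤ x₂) :
    (lift f x₁ : RoundIdeal P r) ≤ lift f x₂ :=
  below_mono (Set.image_mono fun _ hy => WellInside.mono le_rfl hy h)

theorem lift_top (f : FrameHom L' L) : (lift f ⊤ : RoundIdeal P r) = ⊤ :=
  eq_top_of_top_mem (mem_lift.2 ⟨hP.out.top_mem, ⊤, hP.out.top_mem, hr.out.top_top, ⊤,
    WellInside.top_right ⊤, (map_top f).ge⟩)

theorem lift_inf (f : FrameHom L' L) (x₁ x₂ : L') :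
    (lift f (x₁ ⊓ x₂) : RoundIdeal P r) = lift f x₁ ⊓ lift f x₂ := by
  refine le_antisymm (le_inf (lift_mono f inf_le_left) (lift_mono f inf_le_right))
    fun q ⟨hq₁, hq₂⟩ => ?_
  obtain ⟨hq, p₁, hp₁, hqp₁, y₁, hy₁, hpf₁⟩ := mem_lift.1 hq₁
  obtain ⟨-, p₂, hp₂, hqp₂, y₂, hy₂, hpf₂⟩ := mem_lift.1 hq₂
  refine mem_lift.2 ⟨hq, p₁ ⊓ p₂, hP.out.inf_mem hp₁ hp₂, hr.out.inf_right hqp₁ hqp₂,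
    y₁ ⊓ y₂, hy₁.inf hy₂, ?_⟩
  rw [map_inf]
  exact inf_le_inf hpf₁ hpf₂

section Compact

variable {f : FrameHom L' L}

theorem exists_mem_lift_le (hc : IsCompactFrame L') (hreg : IsRegularFrame L')
    (hfine : IsFinerThan P r f) {u x : L'} (h : WellInside u x) :
    ∃ p ∈ (lift f x : RoundIdeal P r), f u ≤ p := by
  obtain ⟨z, huz, hzx⟩ := hc.exists_wellInside_between hreg h
  obtain ⟨p, hp, p', hp', hfp, hpp', hp'f⟩ := hfine z u huz
  exact ⟨p, mem_lift.2 ⟨hp, p', hp', hpp', z, hzx, hp'f⟩, hfp⟩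

theorem lift_sSup (hc : IsCompactFrame L') (hreg : IsRegularFrame L')
    (hfine : IsFinerThan P r f) (S : Set L') :
    (lift f (sSup S) : RoundIdeal P r) = sSup (lift f '' S) := by
  refine le_antisymm (fun q hq => ?_)
    (sSup_le (Set.forall_mem_image.2 fun x hx => lift_mono f (le_sSup hx)))
  obtain ⟨hq, p, -, hqp, y, hy, hpf⟩ := mem_lift.1 hq
  obtain ⟨F, hF, hyF⟩ := hc.exists_finset_wellInside_of_wellInside_sSup hreg hy
  obtain ⟨G, hG, hFG⟩ := F.exists_sup_le_sup_id (g := f)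
      (A := ⋃ J ∈ (lift f '' S : Set (RoundIdeal P r)), (J : Set L)) fun u hu => by
    obtain ⟨x, hx, hux⟩ := hF hu
    obtain ⟨p, hp, hup⟩ := exists_mem_lift_le hc hreg hfine hux
    exact ⟨p, Set.mem_iUnion₂_of_mem (Set.mem_image_of_mem _ hx) hp, hup⟩
  refine mem_sSup.2 ⟨hq, G, hG, ?_⟩
  calc q ≤ p := hr.out.le hqp
    _ ≤ f y := hpf
    _ ≤ f (F.sup id) := OrderHomClass.mono f hyF.le
    _ = F.sup f := map_finset_sup f F id
    _ ≤ G.sup id := hFG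

def liftHom (hc : IsCompactFrame L') (hreg : IsRegularFrame L') (hfine : IsFinerThan P r f) :
    FrameHom L' (RoundIdeal P r) where
  toFun := lift f
  map_inf' := lift_inf f
  map_top' := lift_top f
  map_sSup' := lift_sSup hc hreg hfine

theorem joinHom_comp_liftHom (hc : IsCompactFrame L') (hreg : IsRegularFrame L')
    (hfine : IsFinerThan P r f) (hPb : IsBasis P)
    (hcompat : ∀ a ∈ P, a = sSup {x | x ∈ P ∧ r x a}) :
    joinHom.comp (liftHom hc hreg hfine) = f :=
  FrameHom.ext fun x => by
    change joinHom (lift f x) = f x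
    rw [lift, joinHom_below hPb hcompat, ← map_sSup, ← hreg x]

end Compact

end RoundIdeal

/-- Theorem: a compatible strong inclusion on a sub-pcd-lattice `P` that is a
basis of `L` yields a compactification of `L` with the extension property for
maps from compact regular frames for which the strong inclusion is finer. -/
theorem compactification_of_strongInclusion
    {L : Type u} [Order.Frame L]
    (P : Set L) (hP : IsSubPcdLattice P) (hPb : IsBasis P)
    (r : L → L → Prop) (hr : IsStrongInclusion P r)
    (hcompat : ∀ a ∈ P, a = sSup {x | x ∈ P ∧ r x a}) :
    ∃ (M : Type u) (_ : Order.Frame M), IsCompactFrame M ∧ IsRegularFrame M ∧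
      ∃ μ : FrameHom M L,
        (∀ a : M, μ a = ⊥ → a = ⊥) ∧ Function.Surjective μ ∧
        ∀ (L' : Type u) (_ : Order.Frame L'),
          IsCompactFrame L' → IsRegularFrame L' →
          ∀ f : FrameHom L' L,
            (∀ x y : L', WellInside y x →
              ∃ p ∈ P, ∃ p' ∈ P, f y ≤ p ∧ r p p' ∧ p' ≤ f x) →
            ∃! g : FrameHom L' M, f = μ.comp g := by
  have : Fact (IsSubPcdLattice P) := ⟨hP⟩
  have : Fact (IsStrongInclusion P r) := ⟨hr⟩
  have hdense : ∀ J : RoundIdeal P r, RoundIdeal.joinHom J = ⊥ → J = ⊥ :=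
    fun _ => RoundIdeal.eq_bot_of_joinHom_eq_bot
  refine ⟨RoundIdeal P r, inferInstance, RoundIdeal.isCompactFrame, RoundIdeal.isRegularFrame,
    RoundIdeal.joinHom, hdense, fun a => ?_, fun L' _ hc hreg f hfine => ?_⟩
  · exact ⟨RoundIdeal.principal a, (RoundIdeal.joinHom_below hPb hcompat _ _).trans sSup_singleton⟩
  · have hlift := RoundIdeal.joinHom_comp_liftHom hc hreg hfine hPb hcompat
    exact ⟨_, hlift.symm, fun g hg =>
      FrameHom.eq_of_comp_eq_of_dense hdense hreg (hg.symm.trans hlift.symm)⟩
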